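/- arXiv:2210.11036 — 2 statements merged into one kernel-verified Lean document; each statement's English description precedes it below -/
import Mathlib

section
/- Let p > 2 and let Φ(a) = |a|^(p-2) • a for a ∈ R^d. Suppose (g_n) is a sequence in L^p([0,T] × D; R^d) with g_n ⇀ g weakly in L^p and limsup_n ∫ Φ(g_n) ⬝ g_n ≤ ∫ F ⬝ g, where Φ(g_n) ⇀ F weakly in L^{p'}([0,T] × D; R^d). Then ∫ |g_n - g|^p → 0, i.e., g_n → g strongly in L^p([0,T] × D; R^d). -/
open MeasureTheory Filter RealInnerProductSpace
open scoped ENNReal NNReal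

section Aux

variable {α : Type*} {m : MeasurableSpace α} {μ : Measure α}
variable {E : Type*} [NormedAddCommGroup E] [InnerProductSpace ℝ E]

lemma aux_rpow_split {x a b : ℝ} (hx : 0 ≤ x) (ha : 0 < a) (hb : 0 < b) :
    x ^ (a + b) = x ^ a * x ^ b := by
  rcases eq_or_lt_of_le hx with h | h
  · rw [← h, Real.zero_rpow (by positivity), Real.zero_rpow ha.ne', zero_mul]
  · rw [Real.rpow_add h]

lemma aux_inner_monotone {p : ℝ} (hp : 2 < p) (a b : E) :
    (2 : ℝ) ^ (1 - p) * ‖a - b‖ ^ p ≤ ⟪(‖a‖ ^ (p - 2)) • a - (‖b‖ ^ (p - 2)) • b, a - b⟫ := by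
  have hp2 : (0:ℝ) < p - 2 := by linarith
  set A := ‖a‖ with hA
  set B := ‖b‖ with hB
  have hA0 : 0 ≤ A := norm_nonneg _
  have hB0 : 0 ≤ B := norm_nonneg _
  have ht : |⟪a, b⟫| ≤ A * B := abs_real_inner_le_norm a b
  have hexp : ⟪(A ^ (p - 2)) • a - (B ^ (p - 2)) • b, a - b⟫
      = A ^ (p-2) * A^2 + B ^ (p-2) * B^2 - (A ^ (p-2) + B ^ (p-2)) * ⟪a, b⟫ := by
    simp only [inner_sub_left, inner_sub_right, real_inner_smul_left,
      real_inner_self_eq_norm_sq, real_inner_comm b a]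
    ring
  have hnormsub : ‖a - b‖^2 = A^2 - 2 * ⟪a,b⟫ + B^2 := by
    rw [← real_inner_self_eq_norm_sq, inner_sub_sub_self, real_inner_self_eq_norm_sq,
      real_inner_self_eq_norm_sq, real_inner_comm b a]
    ring
  have hmono : (B ^ (p-2) - A ^ (p-2)) * (B^2 - A^2) ≥ 0 := by
    rcases le_total A B with h | h
    · apply mul_nonneg
      · simpa using sub_nonneg.2 (Real.rpow_le_rpow hA0 h hp2.le)
      · nlinarith
    · apply mul_nonneg_iff.2 (Or.inr ⟨?_, ?_⟩)
      · simpa using sub_nonpos.2 (Real.rpow_le_rpow hB0 h hp2.le)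
      · nlinarith
  have step1 : (1/2) * (A ^ (p-2) + B ^ (p-2)) * ‖a - b‖^2
      ≤ ⟪(A ^ (p - 2)) • a - (B ^ (p - 2)) • b, a - b⟫ := by
    rw [hexp, hnormsub]; nlinarith
  have hab : ‖a - b‖ ≤ A + B := norm_sub_le a b
  have hC0 : (0:ℝ) ≤ ‖a - b‖ := norm_nonneg _
  have step2 : ‖a - b‖ ^ (p-2) ≤ 2 ^ (p-2) * (A ^ (p-2) + B ^ (p-2)) := by
    have h1 : ‖a - b‖ ^ (p-2) ≤ (A + B) ^ (p-2) := Real.rpow_le_rpow hC0 hab hp2.le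
    have h2 : A + B ≤ 2 * max A B := by
      rcases le_total A B with h | h
      · simp [max_eq_right h]; linarith
      · simp [max_eq_left h]; linarith
    have h3 : (A + B) ^ (p-2) ≤ (2 * max A B) ^ (p-2) :=
      Real.rpow_le_rpow (by linarith) h2 hp2.le
    have h4 : (2 * max A B) ^ (p-2) = 2 ^ (p-2) * (max A B) ^ (p-2) :=
      Real.mul_rpow (by norm_num) (le_max_of_le_left hA0)
    have h5 : (max A B) ^ (p-2) ≤ A ^ (p-2) + B ^ (p-2) := by
      rcases le_total A B with h | h
      · rw [max_eq_right h]; exact le_add_of_nonneg_left (by positivity)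
      · rw [max_eq_left h]; nlinarith [Real.rpow_nonneg hB0 (p-2)]
    calc ‖a - b‖ ^ (p-2) ≤ (2 * max A B) ^ (p-2) := le_trans h1 h3
      _ = 2 ^ (p-2) * (max A B) ^ (p-2) := h4
      _ ≤ 2 ^ (p-2) * (A ^ (p-2) + B ^ (p-2)) := by
          apply mul_le_mul_of_nonneg_left h5 (by positivity)
  have hsplit : ‖a - b‖ ^ p = ‖a - b‖ ^ (p-2) * ‖a - b‖ ^ 2 := by
    have : ‖a - b‖ ^ ((p-2) + 2) = ‖a - b‖ ^ (p-2) * ‖a - b‖ ^ (2:ℝ) :=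
      aux_rpow_split hC0 hp2 (by norm_num)
    rw [show (p-2) + 2 = p by ring] at this
    rw [this, Real.rpow_two]
  have h2p : (2:ℝ) ^ (1-p) * 2 ^ (p-2) = 1/2 := by
    rw [← Real.rpow_add (by norm_num)]
    norm_num
  calc (2 : ℝ) ^ (1 - p) * ‖a - b‖ ^ p
      = 2 ^ (1-p) * (‖a - b‖ ^ (p-2) * ‖a - b‖^2) := by rw [hsplit]
    _ ≤ 2 ^ (1-p) * ((2 ^ (p-2) * (A ^ (p-2) + B ^ (p-2))) * ‖a - b‖^2) := by
        apply mul_le_mul_of_nonneg_left _ (by positivity)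
        apply mul_le_mul_of_nonneg_right step2 (by positivity)
    _ = (1/2) * (A ^ (p-2) + B ^ (p-2)) * ‖a - b‖^2 := by
        rw [← mul_assoc, ← mul_assoc, h2p]
    _ ≤ _ := step1

lemma aux_norm_Phi {p : ℝ} (hp : 2 < p) (a : E) :
    ‖(‖a‖ ^ (p - 2)) • a‖ = ‖a‖ ^ (p - 1) := by
  rw [norm_smul, Real.norm_eq_abs, abs_of_nonneg (Real.rpow_nonneg (norm_nonneg _) _)]
  have := aux_rpow_split (norm_nonneg a) (show (0:ℝ) < p - 2 by linarith) one_pos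
  rw [show p - 2 + 1 = p - 1 by ring, Real.rpow_one] at this
  exact this.symm

lemma aux_inner_Phi_self {p : ℝ} (hp : 2 < p) (a : E) :
    ⟪(‖a‖ ^ (p - 2)) • a, a⟫ = ‖a‖ ^ p := by
  rw [real_inner_smul_left, real_inner_self_eq_norm_sq]
  have := aux_rpow_split (norm_nonneg a) (show (0:ℝ) < p - 2 by linarith)
    (show (0:ℝ) < 2 by norm_num)
  rw [show p - 2 + 2 = p by ring, Real.rpow_two] at this
  exact this.symm

lemma aux_continuous_Phi {p : ℝ} (hp : 2 < p) :
    Continuous (fun a : E => (‖a‖ ^ (p - 2)) • a) :=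
  (continuous_norm.rpow_const fun _ => Or.inr (by linarith)).smul continuous_id

lemma aux_memℒp_Phi {p p' : ℝ} (hp : 2 < p) (hp' : p' = p / (p - 1)) {f : α → E}
    (hf : MemLp f (ENNReal.ofReal p) μ) :
    MemLp (fun z => (‖f z‖ ^ (p - 2)) • f z) (ENNReal.ofReal p') μ := by
  have h1 : MemLp (fun z => ‖f z‖ ^ (p - 1)) (ENNReal.ofReal p') μ := by
    have := hf.norm_rpow_div (ENNReal.ofReal (p - 1))
    rw [ENNReal.toReal_ofReal (by linarith)] at this
    rwa [hp', ENNReal.ofReal_div_of_pos (by linarith)]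
  refine h1.of_le ((aux_continuous_Phi hp).comp_aestronglyMeasurable hf.1) ?_
  refine Eventually.of_forall fun z => ?_
  rw [aux_norm_Phi hp, Real.norm_eq_abs, abs_of_nonneg (Real.rpow_nonneg (norm_nonneg _) _)]

lemma aux_integrable_inner {p q : ℝ} (hpq : Real.HolderConjugate p q)
    {u v : α → E} (hu : MemLp u (ENNReal.ofReal p) μ) (hv : MemLp v (ENNReal.ofReal q) μ) :
    Integrable (fun z => ⟪u z, v z⟫) μ := by
  rw [← memLp_one_iff_integrable]
  refine ⟨hu.1.inner hv.1, ?_⟩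
  calc eLpNorm (fun z => ⟪u z, v z⟫) 1 μ
      ≤ eLpNorm u (ENNReal.ofReal p) μ * eLpNorm v (ENNReal.ofReal q) μ := by
        haveI : ENNReal.HolderTriple (ENNReal.ofReal p) (ENNReal.ofReal q) 1 :=
          ⟨by simpa using hpq.inv_add_inv_ennreal⟩
        have := eLpNorm_le_eLpNorm_mul_eLpNorm'_of_norm hu.1 hv.1 (fun (x y : E) => ⟪x, y⟫) 1
          (p := ENNReal.ofReal p) (q := ENNReal.ofReal q) (r := 1) (Eventually.of_forall fun z => by simpa using norm_inner_le_norm (𝕜 := ℝ) (u z) (v z))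
        simpa using this
    _ < ⊤ := ENNReal.mul_lt_top hu.2 hv.2

lemma aux_abs_integral_inner_le {p q : ℝ} (hpq : Real.HolderConjugate p q)
    {u v : α → E} (hu : MemLp u (ENNReal.ofReal p) μ) (hv : MemLp v (ENNReal.ofReal q) μ) :
    |∫ z, ⟪u z, v z⟫ ∂μ| ≤ (∫ z, ‖u z‖ ^ p ∂μ) ^ (1/p) * (∫ z, ‖v z‖ ^ q ∂μ) ^ (1/q) := by
  have hint : Integrable (fun z => ‖u z‖ * ‖v z‖) μ := by
    rw [← memLp_one_iff_integrable]
    refine ⟨hu.1.norm.mul hv.1.norm, ?_⟩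
    calc eLpNorm (fun z => ‖u z‖ * ‖v z‖) 1 μ
        ≤ eLpNorm u (ENNReal.ofReal p) μ * eLpNorm v (ENNReal.ofReal q) μ := by
          haveI : ENNReal.HolderTriple (ENNReal.ofReal p) (ENNReal.ofReal q) 1 :=
            ⟨by simpa using hpq.inv_add_inv_ennreal⟩
          have := eLpNorm_le_eLpNorm_mul_eLpNorm'_of_norm hu.1 hv.1 (fun (x y : E) => ‖x‖ * ‖y‖) 1
            (p := ENNReal.ofReal p) (q := ENNReal.ofReal q) (r := 1) (Eventually.of_forall fun z => by
              simp [abs_mul, abs_of_nonneg (norm_nonneg _)])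
          simpa using this
      _ < ⊤ := ENNReal.mul_lt_top hu.2 hv.2
  calc |∫ z, ⟪u z, v z⟫ ∂μ| ≤ ∫ z, |⟪u z, v z⟫| ∂μ := by
        simpa [Real.norm_eq_abs] using
          norm_integral_le_integral_norm (fun z => ⟪u z, v z⟫) (μ := μ)
    _ ≤ ∫ z, ‖u z‖ * ‖v z‖ ∂μ := by
        apply integral_mono (aux_integrable_inner hpq hu hv).abs hint
        intro z
        exact abs_real_inner_le_norm _ _
    _ ≤ _ := integral_mul_norm_le_Lp_mul_Lq hpq hu hv

lemma aux_uniform_bound [CompleteSpace E] {p q : ℝ} (hpq : Real.HolderConjugate p q)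
    (w : ℕ → α → E) (hw : ∀ n, MemLp (w n) (ENNReal.ofReal p) μ)
    (hconv : ∀ φ : α → E, MemLp φ (ENNReal.ofReal q) μ →
      ∃ l, Tendsto (fun n => ∫ z, ⟪w n z, φ z⟫ ∂μ) atTop (nhds l)) :
    ∃ M : ℝ, 0 ≤ M ∧ ∀ (n : ℕ) (φ : α → E), MemLp φ (ENNReal.ofReal q) μ →
      |∫ z, ⟪w n z, φ z⟫ ∂μ| ≤ M * (∫ z, ‖φ z‖ ^ q ∂μ) ^ (1/q) := by
  set Q : ℝ≥0∞ := ENNReal.ofReal q with hQ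
  haveI : Fact ((1:ℝ≥0∞) ≤ Q) := ⟨by
    rw [hQ, ← ENNReal.ofReal_one]
    exact ENNReal.ofReal_le_ofReal hpq.symm.lt.le⟩
  have hQ0 : Q ≠ 0 := by
    simp [hQ, ENNReal.ofReal_eq_zero, not_le, hpq.symm.pos]
  have hQt : Q ≠ ⊤ := ENNReal.ofReal_ne_top
  have hnorm : ∀ (φ : α → E), MemLp φ Q μ →
      (eLpNorm φ Q μ).toReal = (∫ z, ‖φ z‖ ^ q ∂μ) ^ (1/q) := by
    intro φ hφ
    rw [hφ.eLpNorm_eq_integral_rpow_norm hQ0 hQt]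
    rw [hQ, ENNReal.toReal_ofReal hpq.symm.nonneg] at *
    rw [ENNReal.toReal_ofReal (Real.rpow_nonneg (integral_nonneg fun z =>
        Real.rpow_nonneg (norm_nonneg _) _) _), one_div]
  have hbound : ∀ (n : ℕ) (φ : Lp E Q μ),
      ‖∫ z, ⟪w n z, (φ : α → E) z⟫ ∂μ‖ ≤ ((∫ z, ‖w n z‖ ^ p ∂μ) ^ (1/p)) * ‖φ‖ := by
    intro n φ
    rw [Lp.norm_def, hnorm φ (Lp.memLp φ), Real.norm_eq_abs]
    exact aux_abs_integral_inner_le hpq (hw n) (Lp.memLp φ)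
  let T : ℕ → (Lp E Q μ →L[ℝ] ℝ) := fun n =>
    LinearMap.mkContinuous
      { toFun := fun φ => ∫ z, ⟪w n z, (φ : α → E) z⟫ ∂μ
        map_add' := by
          intro φ ψ
          have h1 : ∫ z, ⟪w n z, ((φ + ψ : Lp E Q μ) : α → E) z⟫ ∂μ
              = ∫ z, (⟪w n z, (φ : α → E) z⟫ + ⟪w n z, (ψ : α → E) z⟫) ∂μ := by
            refine integral_congr_ae ?_
            filter_upwards [Lp.coeFn_add φ ψ] with z hz
            rw [hz, Pi.add_apply, inner_add_right]
          rw [h1, integral_add (aux_integrable_inner hpq (hw n) (Lp.memLp φ))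
            (aux_integrable_inner hpq (hw n) (Lp.memLp ψ))]
        map_smul' := by
          intro c φ
          have h1 : ∫ z, ⟪w n z, ((c • φ : Lp E Q μ) : α → E) z⟫ ∂μ
              = ∫ z, c * ⟪w n z, (φ : α → E) z⟫ ∂μ := by
            refine integral_congr_ae ?_
            filter_upwards [Lp.coeFn_smul c φ] with z hz
            rw [hz, Pi.smul_apply, inner_smul_right]
          rw [h1, integral_const_mul]
          rfl }
      ((∫ z, ‖w n z‖ ^ p ∂μ) ^ (1/p)) (fun φ => hbound n φ)
  have hptwise : ∀ φ : Lp E Q μ, ∃ C, ∀ n, ‖T n φ‖ ≤ C := by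
    intro φ
    obtain ⟨l, hl⟩ := hconv φ (Lp.memLp φ)
    obtain ⟨C, hC⟩ := (hl.norm).bddAbove_range
    exact ⟨C, fun n => hC (Set.mem_range_self n)⟩
  obtain ⟨C', hC'⟩ := banach_steinhaus hptwise
  refine ⟨max C' 0, le_max_right _ _, fun n φ hφ => ?_⟩
  have h1 : ∫ z, ⟪w n z, φ z⟫ ∂μ = T n (hφ.toLp φ) := by
    refine integral_congr_ae ?_
    filter_upwards [hφ.coeFn_toLp] with z hz
    rw [hz]
  rw [h1, ← Real.norm_eq_abs]
  calc ‖T n (hφ.toLp φ)‖ ≤ ‖T n‖ * ‖hφ.toLp φ‖ := (T n).le_opNorm _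
    _ ≤ max C' 0 * (∫ z, ‖φ z‖ ^ q ∂μ) ^ (1/q) := by
        apply mul_le_mul (le_trans (hC' n) (le_max_left _ _))
        · rw [Lp.norm_def]
          have h2 : eLpNorm (hφ.toLp φ : α → E) Q μ = eLpNorm φ Q μ :=
            eLpNorm_congr_ae hφ.coeFn_toLp
          rw [h2, hnorm φ hφ]
        · exact norm_nonneg _
        · exact le_trans (norm_nonneg _) (le_trans (hC' n) (le_max_left _ _))

end Aux

theorem stmt_16 (d : ℕ) (p : ℝ) (hp : 2 < p) (p' : ℝ) (hp' : p' = p / (p - 1))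
    (T : ℝ) (hT : 0 < T)
    (D : Set (EuclideanSpace ℝ (Fin d))) (hD : MeasurableSet D)
    (hDbdd : Bornology.IsBounded D)
    (μ : Measure (ℝ × EuclideanSpace ℝ (Fin d)))
    (hμ : μ = ((volume : Measure ℝ).restrict (Set.Icc 0 T)).prod (volume.restrict D))
    (Φ : EuclideanSpace ℝ (Fin d) → EuclideanSpace ℝ (Fin d))
    (hΦ : ∀ a, Φ a = (‖a‖ ^ (p - 2)) • a)
    (gn : ℕ → ℝ × EuclideanSpace ℝ (Fin d) → EuclideanSpace ℝ (Fin d))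
    (g F : ℝ × EuclideanSpace ℝ (Fin d) → EuclideanSpace ℝ (Fin d))
    (hgn : ∀ n, MemLp (gn n) (ENNReal.ofReal p) μ)
    (hg : MemLp g (ENNReal.ofReal p) μ)
    (hF : MemLp F (ENNReal.ofReal p') μ)
    (hgnweak : ∀ φ : ℝ × EuclideanSpace ℝ (Fin d) → EuclideanSpace ℝ (Fin d),
      MemLp φ (ENNReal.ofReal p') μ →
      Tendsto (fun n => ∫ z, ⟪gn n z, φ z⟫ ∂μ) atTop (nhds (∫ z, ⟪g z, φ z⟫ ∂μ)))
    (hΦweak : ∀ ψ : ℝ × EuclideanSpace ℝ (Fin d) → EuclideanSpace ℝ (Fin d),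
      MemLp ψ (ENNReal.ofReal p) μ →
      Tendsto (fun n => ∫ z, ⟪Φ (gn n z), ψ z⟫ ∂μ) atTop (nhds (∫ z, ⟪F z, ψ z⟫ ∂μ)))
    (hlimsup : Filter.limsup (fun n => ∫ z, ⟪Φ (gn n z), gn n z⟫ ∂μ) atTop ≤
      ∫ z, ⟪F z, g z⟫ ∂μ) :
    Tendsto (fun n => ∫ z, ‖gn n z - g z‖ ^ p ∂μ) atTop (nhds 0) := by
  have hp1 : (1:ℝ) < p := by linarith
  have hp0 : (0:ℝ) < p := by linarith
  have hpc : Real.HolderConjugate p p' := Real.holderConjugate_iff.2 ⟨hp1, by rw [hp']; field_simp; ring⟩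
  -- MemLp of the Φ compositions
  have hPhign : ∀ n, MemLp (fun z => Φ (gn n z)) (ENNReal.ofReal p') μ := fun n => by
    simp only [hΦ]; exact aux_memℒp_Phi hp hp' (hgn n)
  have hPhig : MemLp (fun z => Φ (g z)) (ENNReal.ofReal p') μ := by
    simp only [hΦ]; exact aux_memℒp_Phi hp hp' hg
  -- integrability of the inner products
  have int11 : ∀ n, Integrable (fun z => ⟪Φ (gn n z), gn n z⟫) μ :=
    fun n => aux_integrable_inner hpc.symm (hPhign n) (hgn n)
  have int12 : ∀ n, Integrable (fun z => ⟪Φ (gn n z), g z⟫) μ :=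
    fun n => aux_integrable_inner hpc.symm (hPhign n) hg
  have int13 : ∀ n, Integrable (fun z => ⟪Φ (g z), gn n z⟫) μ :=
    fun n => aux_integrable_inner hpc.symm hPhig (hgn n)
  have int14 : Integrable (fun z => ⟪Φ (g z), g z⟫) μ :=
    aux_integrable_inner hpc.symm hPhig hg
  set I1 : ℕ → ℝ := fun n => ∫ z, ⟪Φ (gn n z), gn n z⟫ ∂μ with hI1def
  set L : ℝ := ∫ z, ⟪F z, g z⟫ ∂μ with hLdef
  set C : ℝ := ∫ z, ⟪Φ (g z), g z⟫ ∂μ with hCdef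
  set I2 : ℕ → ℝ := fun n => ∫ z, ⟪Φ (gn n z), g z⟫ ∂μ with hI2def
  set I3 : ℕ → ℝ := fun n => ∫ z, ⟪Φ (g z), gn n z⟫ ∂μ with hI3def
  have hI2t : Tendsto I2 atTop (nhds L) := hΦweak g hg
  have hI3t : Tendsto I3 atTop (nhds C) := by
    have h := hgnweak (fun z => Φ (g z)) hPhig
    have e1 : ∀ n, (∫ z, ⟪gn n z, Φ (g z)⟫ ∂μ) = I3 n := fun n =>
      integral_congr_ae (Eventually.of_forall fun z => real_inner_comm _ _)
    have e2 : (∫ z, ⟪g z, Φ (g z)⟫ ∂μ) = C :=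
      integral_congr_ae (Eventually.of_forall fun z => real_inner_comm _ _)
    rw [e2] at h
    exact h.congr e1
  have hI1eq : ∀ n, I1 n = ∫ z, ‖gn n z‖ ^ p ∂μ := fun n =>
    integral_congr_ae (Eventually.of_forall fun z => by
      show ⟪Φ (gn n z), gn n z⟫ = ‖gn n z‖ ^ p
      rw [hΦ]; exact aux_inner_Phi_self hp _)
  -- uniform bound via Banach–Steinhaus
  obtain ⟨M, hM0, hMb⟩ := aux_uniform_bound hpc gn hgn (fun φ hφ => ⟨_, hgnweak φ hφ⟩)
  have hPhinorm : ∀ (a : EuclideanSpace ℝ (Fin d)), ‖Φ a‖ ^ p' = ‖a‖ ^ p := fun a => by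
    rw [hΦ, aux_norm_Phi hp, ← Real.rpow_mul (norm_nonneg _)]
    congr 1
    rw [hp']
    have h1 : p - 1 ≠ 0 := by linarith
    field_simp
  have hI1bdd : ∀ n, I1 n ≤ max 1 (M ^ p) := by
    intro n
    have hx0 : 0 ≤ ∫ z, ‖gn n z‖ ^ p ∂μ :=
      integral_nonneg fun z => Real.rpow_nonneg (norm_nonneg _) _
    set x : ℝ := ∫ z, ‖gn n z‖ ^ p ∂μ with hxdef
    have key : x ≤ M * x ^ (1/p') := by
      have h1 := hMb n (fun z => Φ (gn n z)) (hPhign n)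
      have e1 : (∫ z, ⟪gn n z, Φ (gn n z)⟫ ∂μ) = x :=
        integral_congr_ae (Eventually.of_forall fun z => by
          show ⟪gn n z, Φ (gn n z)⟫ = ‖gn n z‖ ^ p
          rw [real_inner_comm, hΦ]; exact aux_inner_Phi_self hp _)
      have e2 : (∫ z, ‖Φ (gn n z)‖ ^ p' ∂μ) = x :=
        integral_congr_ae (Eventually.of_forall fun z => hPhinorm _)
      rw [e1, e2] at h1
      calc x ≤ |x| := le_abs_self x
        _ ≤ M * x ^ (1/p') := h1
    rw [hI1eq n, ← hxdef]
    by_cases hx1 : x ≤ 1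
    · exact hx1.trans (le_max_left _ _)
    push_neg at hx1
    have hxpos : (0:ℝ) < x := lt_trans one_pos hx1
    have hsplit : x = x ^ (1/p) * x ^ (1/p') := by
      rw [← Real.rpow_add hxpos]
      rw [show 1/p + 1/p' = 1 by rw [one_div, one_div]; exact hpc.inv_add_inv_eq_one]
      rw [Real.rpow_one]
    have h2 : x ^ (1/p) ≤ M := by
      have hxp' : (0:ℝ) < x ^ (1/p') := Real.rpow_pos_of_pos hxpos _
      have h3 : x ^ (1/p) * x ^ (1/p') ≤ M * x ^ (1/p') := by rw [← hsplit]; exact key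
      exact le_of_mul_le_mul_right h3 hxp'
    have h4 : (x ^ (1/p)) ^ p ≤ M ^ p :=
      Real.rpow_le_rpow (Real.rpow_nonneg hxpos.le _) h2 hp0.le
    have h5 : (x ^ (1/p)) ^ p = x := by
      rw [← Real.rpow_mul hxpos.le, one_div, inv_mul_cancel₀ hp0.ne', Real.rpow_one]
    rw [← h5]
    exact h4.trans (le_max_right _ _)
  -- the monotonicity integral
  set A : ℕ → ℝ := fun n => ∫ z, ⟪Φ (gn n z) - Φ (g z), gn n z - g z⟫ ∂μ with hAdef
  have int1213 : ∀ n, Integrable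
      (fun z => ⟪Φ (gn n z), gn n z⟫ - ⟪Φ (gn n z), g z⟫) μ := fun n =>
    (int11 n).sub (int12 n)
  have int1314 : ∀ n, Integrable
      (fun z => ⟪Φ (g z), gn n z⟫ - ⟪Φ (g z), g z⟫) μ := fun n =>
    (int13 n).sub int14
  have intcomb : ∀ n, Integrable (fun z => (⟪Φ (gn n z), gn n z⟫ - ⟪Φ (gn n z), g z⟫)
      - (⟪Φ (g z), gn n z⟫ - ⟪Φ (g z), g z⟫)) μ := fun n =>
    (int1213 n).sub (int1314 n)
  have ecomb : ∀ n, (fun z => ⟪Φ (gn n z) - Φ (g z), gn n z - g z⟫)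
      = fun z => (⟪Φ (gn n z), gn n z⟫ - ⟪Φ (gn n z), g z⟫)
          - (⟪Φ (g z), gn n z⟫ - ⟪Φ (g z), g z⟫) := by
    intro n
    funext z
    simp only [inner_sub_left, inner_sub_right]
    ring
  have intA : ∀ n, Integrable (fun z => ⟪Φ (gn n z) - Φ (g z), gn n z - g z⟫) μ := fun n => by
    rw [ecomb n]; exact intcomb n
  have hAexp : ∀ n, A n = (I1 n - I2 n) - (I3 n - C) := by
    intro n
    rw [hAdef]
    dsimp only
    rw [ecomb n, integral_sub (int1213 n) (int1314 n),
      integral_sub (int11 n) (int12 n), integral_sub (int13 n) int14]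
  have hA0 : ∀ n, 0 ≤ A n := fun n =>
    integral_nonneg fun z =>
      le_trans (show (0:ℝ) ≤ 2 ^ (1 - p) * ‖gn n z - g z‖ ^ p by positivity)
        (by simp only [hΦ]; exact aux_inner_monotone hp (gn n z) (g z))
  -- convergence of I1
  set J : ℕ → ℝ := fun n => I2 n + I3 n - C with hJdef
  have hJt : Tendsto J atTop (nhds L) := by
    have h := (hI2t.add hI3t).sub_const C
    rw [show L + C - C = L by ring] at h
    exact h
  have hJle : ∀ n, J n ≤ I1 n := by
    intro n
    have h1 := hA0 n
    rw [hAexp n] at h1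
    simp only [hJdef]
    linarith
  have hI1bddAbove : IsBoundedUnder (· ≤ ·) atTop I1 :=
    isBoundedUnder_of ⟨max 1 (M ^ p), hI1bdd⟩
  have hI1bddBelow : IsBoundedUnder (· ≥ ·) atTop I1 := by
    obtain ⟨b, hb⟩ := hJt.isBoundedUnder_ge
    refine ⟨b, ?_⟩
    rw [Filter.eventually_map] at hb ⊢
    exact hb.mono fun n h => le_trans h (hJle n)
  have hliminf : L ≤ liminf I1 atTop := by
    rw [← hJt.liminf_eq]
    exact liminf_le_liminf (Eventually.of_forall hJle) hJt.isBoundedUnder_ge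
      hI1bddAbove.isCobounded_flip
  have hI1t : Tendsto I1 atTop (nhds L) :=
    tendsto_of_le_liminf_of_limsup_le hliminf hlimsup hI1bddAbove hI1bddBelow
  have hAt : Tendsto A atTop (nhds 0) := by
    have h := (hI1t.sub hI2t).sub (hI3t.sub (tendsto_const_nhds : Tendsto (fun _ : ℕ => C) atTop (nhds C)))
    rw [show L - L - (C - C) = 0 by ring] at h
    exact Tendsto.congr (fun n => (hAexp n).symm) h
  -- squeeze
  have hB0 : ∀ n, 0 ≤ ∫ z, ‖gn n z - g z‖ ^ p ∂μ := fun n =>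
    integral_nonneg fun z => Real.rpow_nonneg (norm_nonneg _) _
  have intB : ∀ n, Integrable (fun z => ‖gn n z - g z‖ ^ p) μ := by
    intro n
    have h := ((hgn n).sub hg).norm_rpow
      (by simp only [Ne, ENNReal.ofReal_eq_zero, not_le]; linarith) ENNReal.ofReal_ne_top
    rw [ENNReal.toReal_ofReal hp0.le] at h
    exact (memLp_one_iff_integrable.mp h).congr
      (Eventually.of_forall fun z => by simp [Pi.sub_apply])
  have hBle : ∀ n, (∫ z, ‖gn n z - g z‖ ^ p ∂μ) ≤ 2 ^ (p - 1) * A n := by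
    intro n
    have key : (2:ℝ) ^ (1 - p) * ∫ z, ‖gn n z - g z‖ ^ p ∂μ ≤ A n := by
      rw [← integral_const_mul]
      exact integral_mono ((intB n).const_mul _) (intA n) fun z => by
        simp only [hΦ]; exact aux_inner_monotone hp (gn n z) (g z)
    have h2 : (2:ℝ) ^ (p - 1) * ((2:ℝ) ^ (1 - p) * ∫ z, ‖gn n z - g z‖ ^ p ∂μ)
        = ∫ z, ‖gn n z - g z‖ ^ p ∂μ := by
      rw [← mul_assoc, ← Real.rpow_add two_pos]
      norm_num
    calc (∫ z, ‖gn n z - g z‖ ^ p ∂μ)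
        = 2 ^ (p - 1) * ((2:ℝ) ^ (1 - p) * ∫ z, ‖gn n z - g z‖ ^ p ∂μ) := h2.symm
      _ ≤ 2 ^ (p - 1) * A n := mul_le_mul_of_nonneg_left key (by positivity)
  have hlim2 : Tendsto (fun n => (2:ℝ) ^ (p - 1) * A n) atTop (nhds 0) := by
    have h := hAt.const_mul ((2:ℝ) ^ (p - 1))
    simpa using h
  exact tendsto_of_tendsto_of_tendsto_of_le_of_le tendsto_const_nhds hlim2 hB0 hBle
end

section
/- Let f : R → R^d be Lipschitz and let v ∈ C_c^∞(D) for a bounded open set D ⊂ R^d (or more generally v ∈ W_0^{1,p}(D) with p > 1). Define F(r) = ∫₀^r f(s) ds componentwise. Then ∫_D f(v(x)) ⬝ ∇v(x) dx = 0. -/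
open MeasureTheory RealInnerProductSpace

theorem stmt_18 (d : ℕ) (D : Set (EuclideanSpace ℝ (Fin d)))
    (hDopen : IsOpen D) (hDbdd : Bornology.IsBounded D)
    (f : ℝ → EuclideanSpace ℝ (Fin d)) (K : NNReal) (hf : LipschitzWith K f)
    (v : EuclideanSpace ℝ (Fin d) → ℝ) (hv : ContDiff ℝ (⊤ : ℕ∞) v)
    (hvsupp : HasCompactSupport v) (hvD : tsupport v ⊆ D) :
    ∫ x in D, ⟪f (v x), gradient v x⟫ = 0 := by
  classical
  have hvdiff : Differentiable ℝ v := hv.differentiable (by simp)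
  have hfc : Continuous f := hf.continuous
  have hvc : Continuous v := hv.continuous
  have hfd_cont : Continuous (fun x => fderiv ℝ v x) := (hv.fderiv_right (m := (⊤ : ℕ∞)) (by simp)).continuous
  -- fderiv vanishes off the support of v
  have hfd0 : ∀ x ∉ tsupport v, fderiv ℝ v x = 0 := by
    intro x hx
    by_contra h
    exact hx (support_fderiv_subset (𝕜 := ℝ) (Function.mem_support.2 h))
  -- gradient in terms of fderiv
  have hgrad : ∀ x y, ⟪gradient v x, y⟫ = fderiv ℝ v x y := by
    intro x y
    rw [gradient]
    exact InnerProductSpace.toDual_symm_apply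
  have hgrad0 : ∀ x ∉ tsupport v, gradient v x = 0 := by
    intro x hx
    rw [gradient, hfd0 x hx]
    simp
  -- rewrite integrand as a finite sum
  have hinner : ∀ x, ⟪f (v x), gradient v x⟫
      = ∑ i, f (v x) i * fderiv ℝ v x (EuclideanSpace.single i 1) := by
    intro x
    rw [real_inner_comm, PiLp.inner_apply]
    refine Finset.sum_congr rfl fun i _ => ?_
    have h1 : gradient v x i = fderiv ℝ v x (EuclideanSpace.single i 1) := by
      rw [← hgrad x (EuclideanSpace.single i 1)]
      rw [EuclideanSpace.inner_single_right]
      simp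
    rw [RCLike.inner_apply]
    simp [h1, mul_comm]
  -- each summand integrates to zero
  have key : ∀ i : Fin d,
      ∫ x : EuclideanSpace ℝ (Fin d),
        f (v x) i * fderiv ℝ v x (EuclideanSpace.single i 1) = 0 := by
    intro i
    set g : EuclideanSpace ℝ (Fin d) → ℝ := fun x => ∫ t in (0:ℝ)..(v x), f t i with hg_def
    have hfi_cont : Continuous (fun t => f t i) := (continuous_apply i).comp (Continuous.comp (PiLp.continuous_ofLp 2 (fun _ : Fin d => ℝ)) hfc)
    have hF : ∀ r : ℝ, HasDerivAt (fun r => ∫ t in (0:ℝ)..r, f t i) (f r i) r := by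
      intro r
      exact (hfi_cont.integral_hasStrictDerivAt 0 r).hasDerivAt
    have hgderiv : ∀ x, HasFDerivAt g (f (v x) i • fderiv ℝ v x) x := by
      intro x
      exact (hF (v x)).comp_hasFDerivAt x (hvdiff x).hasFDerivAt
    have hgdiff : Differentiable ℝ g := fun x => (hgderiv x).differentiableAt
    have hgfderiv : ∀ x, fderiv ℝ g x = f (v x) i • fderiv ℝ v x := fun x =>
      (hgderiv x).fderiv
    -- integrability facts
    have hsupp : ∀ x ∉ tsupport v, f (v x) i * fderiv ℝ v x (EuclideanSpace.single i 1) = 0 := by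
      intro x hx
      rw [hfd0 x hx]
      simp
    have hcont : Continuous (fun x => f (v x) i * fderiv ℝ v x (EuclideanSpace.single i 1)) := by
      exact (hfi_cont.comp hvc).mul (hfd_cont.clm_apply continuous_const)
    have hcs : HasCompactSupport
        (fun x => f (v x) i * fderiv ℝ v x (EuclideanSpace.single i 1)) := by
      apply HasCompactSupport.intro hvsupp hsupp
    have hint : Integrable (fun x => f (v x) i * fderiv ℝ v x (EuclideanSpace.single i 1)) :=
      hcont.integrable_of_hasCompactSupport hcs
    have hgcont : Continuous g := hgdiff.continuous
    have hg0 : ∀ x ∉ tsupport v, g x = 0 := by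
      intro x hx
      have : v x = 0 := image_eq_zero_of_notMem_tsupport hx
      simp [hg_def, this]
    have hgcs : HasCompactSupport g := HasCompactSupport.intro hvsupp hg0
    have hgint : Integrable g := hgcont.integrable_of_hasCompactSupport hgcs
    have H := integral_mul_fderiv_eq_neg_fderiv_mul_of_integrable
      (f := fun _ : EuclideanSpace ℝ (Fin d) => (1:ℝ)) (g := g)
      (v := EuclideanSpace.single i 1) (μ := volume)
      ?_ ?_ ?_ (fun x _ => differentiableAt_const 1) (fun x _ => hgdiff x)
    · have : (fun x => f (v x) i * fderiv ℝ v x (EuclideanSpace.single i 1))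
          = fun x => (1:ℝ) * fderiv ℝ g x (EuclideanSpace.single i 1) := by
        funext x
        rw [hgfderiv x]
        simp
      rw [this, H]
      simp
    · simp
    · have : (fun x => (1:ℝ) * fderiv ℝ g x (EuclideanSpace.single i 1))
          = fun x => f (v x) i * fderiv ℝ v x (EuclideanSpace.single i 1) := by
        funext x
        rw [hgfderiv x]
        simp
      rw [this]
      exact hint
    · simpa using hgint
  -- put things together
  have h1 : ∫ x in D, ⟪f (v x), gradient v x⟫ = ∫ x, ⟪f (v x), gradient v x⟫ := by
    apply setIntegral_eq_integral_of_forall_compl_eq_zero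
    intro x hx
    have : x ∉ tsupport v := fun h => hx (hvD h)
    rw [hgrad0 x this]
    simp
  rw [h1]
  have h2 : ∫ x, ⟪f (v x), gradient v x⟫
      = ∑ i, ∫ x, f (v x) i * fderiv ℝ v x (EuclideanSpace.single i 1) := by
    rw [← integral_finset_sum]
    · exact integral_congr_ae (Filter.Eventually.of_forall fun x => hinner x)
    · intro i _
      have hfi_cont : Continuous (fun t => f t i) := (continuous_apply i).comp (Continuous.comp (PiLp.continuous_ofLp 2 (fun _ : Fin d => ℝ)) hfc)
      have hcont : Continuous (fun x => f (v x) i * fderiv ℝ v x (EuclideanSpace.single i 1)) :=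
        (hfi_cont.comp hvc).mul (hfd_cont.clm_apply continuous_const)
      refine hcont.integrable_of_hasCompactSupport (HasCompactSupport.intro hvsupp ?_)
      intro x hx
      rw [hfd0 x hx]
      simp
  rw [h2]
  simp [key]
end
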